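/- The non-Pappus matroid is not representable over any field. -/

import Mathlib

/-- The 3-element circuits of the non-Pappus matroid on `{0, ..., 8}`
(the sets `{1,6,8}, {2,5,8}, {1,4,9}, {2,3,9}, {3,6,7}, {4,5,7}, {2,4,6}, {1,3,5}`
shifted to 0-indexing). -/
def nonPappusCircuits : Set (Set (Fin 9)) :=
  {{0,5,7}, {1,4,7}, {0,3,8}, {1,2,8}, {2,5,6}, {3,4,6}, {1,3,5}, {0,2,4}}

/-- Independence in the non-Pappus matroid: sets of cardinality at most `3` containing
none of the listed `3`-element circuits. -/
def nonPappusIndep (X : Set (Fin 9)) : Prop :=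
  X.ncard ≤ 3 ∧ ∀ C ∈ nonPappusCircuits, ¬C ⊆ X

/-!
In a representation, the points `0, 2, 4` and `1, 3, 5` lie on two lines of the projective plane
over `k`, and `8, 7, 6` are the intersections of the cross-joins `03 ∩ 12`, `05 ∩ 14`, `25 ∩ 34`.
Pappus's theorem makes `8, 7, 6` collinear, but `{6, 7, 8}` is independent in the matroid.
-/

open Submodule

section LinearAlgebra

variable {ι R M : Type*} [Ring R] [AddCommGroup M] [Module R M]

theorem LinearIndependent.eq_zero_of_triple {x y z : M} (h : LinearIndependent R ![x, y, z])
    {a b c : R} (habc : a • x + b • y + c • z = 0) : a = 0 ∧ b = 0 ∧ c = 0 := by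
  have := Fintype.linearIndependent_iff.mp h ![a, b, c]
    (by simpa [Fin.sum_univ_three] using habc)
  exact ⟨this 0, this 1, this 2⟩

theorem LinearIndepOn.linearIndependent_triple {v : ι → M} {i j l : ι}
    (h : LinearIndepOn R v {i, j, l}) (hij : i ≠ j) (hil : i ≠ l) (hjl : j ≠ l) :
    LinearIndependent R ![v i, v j, v l] := by
  let t : Fin 3 → ({i, j, l} : Set ι) := ![⟨i, by simp⟩, ⟨j, by simp⟩, ⟨l, by simp⟩]
  have ht : Function.Injective t := by
    intro a b hab
    fin_cases a <;> fin_cases b <;> simp_all [t]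
  convert h.comp t ht using 1
  ext n
  fin_cases n <;> rfl

end LinearAlgebra

section Pappus

variable {k V : Type*} [Field k] [AddCommGroup V] [Module k V]

theorem ne_zero_of_smul_add_smul_eq_of_notMem_span {x y z : V} {s t : k}
    (h : s • x + t • y = z) (hz : z ∉ k ∙ y) : s ≠ 0 := by
  rintro rfl
  exact hz (mem_span_singleton.mpr ⟨t, by simpa using h⟩)

/-- The points `aᵢ` lie on one line, the `bⱼ` on another, and `cᵢⱼ` is the intersection of the
lines `aᵢbⱼ` and `aⱼbᵢ`. -/
theorem pappus {a₁ a₂ a₃ b₁ b₂ b₃ c₁₂ c₁₃ c₂₃ : V}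
    (hbasis : LinearIndependent k ![a₁, b₁, a₂])
    (ha₃ : a₃ ∈ span k {a₁, a₂}) (hc₁₂ : c₁₂ ∈ span k {b₁, a₂})
    (hb₂ : b₂ ∈ span k {a₁, c₁₂}) (hb₃ : b₃ ∈ span k {b₁, b₂})
    (hc₁₃ : c₁₃ ∈ span k {a₁, b₃}) (hc₁₃' : c₁₃ ∈ span k {b₁, a₃})
    (hc₂₃ : c₂₃ ∈ span k {a₂, b₃}) (hc₂₃' : c₂₃ ∈ span k {b₂, a₃})
    (hb₃c₁₃ : c₁₃ ∉ k ∙ b₃) (ha₃c₁₃ : c₁₃ ∉ k ∙ a₃) (ha₂c₂₃ : c₂₃ ∉ k ∙ a₂) :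
    ¬ LinearIndependent k ![c₂₃, c₁₃, c₁₂] := by
  obtain ⟨p, q, ha₃⟩ := mem_span_pair.mp ha₃
  obtain ⟨r, s, hc₁₂⟩ := mem_span_pair.mp hc₁₂
  obtain ⟨u, w, hb₂⟩ := mem_span_pair.mp hb₂
  obtain ⟨m, n, hb₃⟩ := mem_span_pair.mp hb₃
  obtain ⟨c, d, hc₁₃⟩ := mem_span_pair.mp hc₁₃
  obtain ⟨e, f, hc₁₃'⟩ := mem_span_pair.mp hc₁₃'
  obtain ⟨g, h, hc₂₃⟩ := mem_span_pair.mp hc₂₃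
  obtain ⟨i, j, hc₂₃'⟩ := mem_span_pair.mp hc₂₃'
  have hc : c ≠ 0 := ne_zero_of_smul_add_smul_eq_of_notMem_span hc₁₃ hb₃c₁₃
  have he : e ≠ 0 := ne_zero_of_smul_add_smul_eq_of_notMem_span hc₁₃' ha₃c₁₃
  have hh : h ≠ 0 :=
    ne_zero_of_smul_add_smul_eq_of_notMem_span ((add_comm _ _).trans hc₂₃) ha₂c₂₃
  intro hli
  suffices key : (f*p*d*r) • c₂₃ + (-(n*u*h*d*r)) • c₁₃ + (-(e*c*h)) • c₁₂ = 0 from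
    mul_ne_zero (mul_ne_zero he hc) hh (neg_eq_zero.mp (hli.eq_zero_of_triple key).2.2)
  -- Coordinates in the basis `a₁, b₁, a₂`; parametrising `b₂` through `c₁₂` keeps them
  -- polynomial.
  -- The two descriptions of `c₁₃` and of `c₂₃` give six relations among the coefficients.
  subst ha₃ hc₁₂ hb₂ hb₃ hc₁₃ hc₂₃
  obtain ⟨i1, i2, i3⟩ := hbasis.eq_zero_of_triple (a := c + d*n*u - f*p)
    (b := d*m + d*n*w*r - e) (c := d*n*w*s - f*q)
    (by linear_combination (norm := module) -hc₁₃')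
  obtain ⟨i4, i5, i6⟩ := hbasis.eq_zero_of_triple (a := h*n*u - i*u - j*p)
    (b := h*m + h*n*w*r - i*w*r) (c := h*n*w*s + g - i*w*s - j*q)
    (by linear_combination (norm := module) -hc₂₃')
  match_scalars
  · linear_combination (-(d*r*d*n*w*s))*i4 + (d*r*f*p)*i6 + (-(d*r*j*p))*i3 +
        (-(d*r*i*w*s))*i1 + (-(d*c*s))*i5 + (c*h*s)*i2
  · linear_combination (c*h*r)*i2 - ((m + n*w*r)*h*d*r)*i1
  · linear_combination (-(h*d*r*n*u)) * i1

end Pappus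

theorem ncard_eq_three_of_mem_nonPappusCircuits {C : Set (Fin 9)}
    (hC : C ∈ nonPappusCircuits) : C.ncard = 3 := by
  rcases hC with rfl | rfl | rfl | rfl | rfl | rfl | rfl | rfl <;>
    exact Set.ncard_eq_three.mpr ⟨_, _, _, by decide, by decide, by decide, rfl⟩

theorem nonPappusIndep_pair {a b : Fin 9} (hab : a ≠ b) : nonPappusIndep {a, b} := by
  refine ⟨by rw [Set.ncard_pair hab]; norm_num, fun C hC hCab => ?_⟩
  have := Set.ncard_le_ncard hCab
  rw [Set.ncard_pair hab, ncard_eq_three_of_mem_nonPappusCircuits hC] at this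
  omega

theorem nonPappusIndep_012 : nonPappusIndep {0, 1, 2} :=
  ⟨(Set.ncard_eq_three.mpr ⟨_, _, _, by decide, by decide, by decide, rfl⟩).le,
    by simp [nonPappusCircuits, Set.insert_subset_iff]⟩

theorem nonPappusIndep_678 : nonPappusIndep {6, 7, 8} :=
  ⟨(Set.ncard_eq_three.mpr ⟨_, _, _, by decide, by decide, by decide, rfl⟩).le,
    by simp [nonPappusCircuits, Set.insert_subset_iff]⟩

/-- The non-Pappus matroid is not representable over any field. -/
theorem nonPappus_not_representable {k : Type*} [Field k] (φ : Fin 9 → (Fin 3 → k)) :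
    ¬ ∀ X : Set (Fin 9), nonPappusIndep X ↔ LinearIndependent k (fun x : X => φ x) := by
  intro (h : ∀ X, nonPappusIndep X ↔ LinearIndepOn k φ X)
  have hpair {a b : Fin 9} (hab : a ≠ b) : LinearIndepOn k φ {a, b} :=
    (h _).mp (nonPappusIndep_pair hab)
  have hspan (a b c : Fin 9) (hab : a ≠ b) (hC : {a, b, c} ∈ nonPappusCircuits) :
      φ c ∈ span k {φ a, φ b} := by
    have hdep : ¬ LinearIndepOn k φ {c, a, b} := fun hli =>
      ((h _).mpr hli).2 _ hC (by rw [Set.pair_comm b c, Set.insert_comm])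
    rw [← Set.image_pair]
    exact (hpair hab).mem_span_iff.mpr (absurd · hdep)
  have hnot {a b : Fin 9} (hab : a ≠ b) : φ a ∉ k ∙ φ b := by
    simpa using ((linearIndepOn_insert (by simpa using hab)).mp (hpair hab)).2
  exact pappus
    (((h _).mp nonPappusIndep_012).linearIndependent_triple (by decide) (by decide) (by decide))
    (hspan 0 2 4 (by decide) (by simp [nonPappusCircuits]))
    (hspan 1 2 8 (by decide) (by simp [nonPappusCircuits]))
    (hspan 0 8 3 (by decide) (by simp [nonPappusCircuits, Set.pair_comm]))
    (hspan 1 3 5 (by decide) (by simp [nonPappusCircuits]))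
    (hspan 0 5 7 (by decide) (by simp [nonPappusCircuits]))
    (hspan 1 4 7 (by decide) (by simp [nonPappusCircuits]))
    (hspan 2 5 6 (by decide) (by simp [nonPappusCircuits]))
    (hspan 3 4 6 (by decide) (by simp [nonPappusCircuits]))
    (hnot (by decide)) (hnot (by decide)) (hnot (by decide))
    (((h _).mp nonPappusIndep_678).linearIndependent_triple (by decide) (by decide) (by decide))
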